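/- Let N be a positive integer, ℓ a prime dividing N exactly once, a, b integers with ℓb − a(N/ℓ) = 1, and γ_ℓ = [[ℓ, a],[N, ℓb]]. Then: (i) for every δ = [[w, x],[c, d]] ∈ Γ₀(N), the rational matrix γ_ℓ·δ·γ_ℓ⁻¹ has integer entries, determinant 1, lower-left entry divisible by N, and its lower-right entry is congruent to d modulo N/ℓ; (ii) consequently, if χ' is a Dirichlet character modulo N/ℓ with values in ℂ, k is an integer, and f : ℍ → ℂ satisfies f(δ·z) = χ'(d)·(cz+d)^k·f(z) for all δ = [[w,x],[c,d]] ∈ Γ₀(N), then the function g(z) := (Nz+ℓb)^{−k}·f(γ_ℓ·z) satisfies the same transformation law: g(δ·z) = χ'(d)·(cz+d)^k·g(z) for all δ = [[w,x],[c,d]] ∈ Γ₀(N). (Thus the Atkin–Lehner operator w_ℓ preserves the space of modular forms with character χ induced from level N/ℓ.) -/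

import Mathlib

open UpperHalfPlane Complex CongruenceSubgroup MatrixGroups Matrix

/-!
Write `M = N / ℓ`. The matrix `γ_ℓ = [[ℓ, a], [N, ℓb]]` factors as `A · diag(ℓ, 1)` with
`A = [[1, a], [M, ℓb]] ∈ SL₂(ℤ)`, and `diag(ℓ, 1) δ = δ' diag(ℓ, 1)` with
`δ' = [[w, ℓx], [c/ℓ, d]] ∈ SL₂(ℤ)`. Hence `m = γ_ℓ δ γ_ℓ⁻¹ = A δ' A⁻¹ ∈ SL₂(ℤ)`; multiplying out,
`N ∣ m₁₀` and `m₁₁ = ℓbd - aMw - abc + ℓMx ≡ ℓbd ≡ d (mod M)`.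

For (ii), `γ_ℓ` has determinant `ℓ > 0`, so the cocycle relation `j(gh, z) = j(g, hz) j(h, z)` for
`j(g, z) = cz + d`, applied to `m γ_ℓ = γ_ℓ δ`, turns the law of `f` under `m` into the law of
`z ↦ j(γ_ℓ, z)⁻ᵏ f(γ_ℓ z)` under `δ`; the characters agree since `m₁₁ ≡ d (mod M)`.
-/

def atkinLehnerMatrix (N ℓ : ℕ) (a b : ℤ) : Matrix (Fin 2) (Fin 2) ℤ :=
  !![(ℓ : ℤ), a; (N : ℤ), ℓ * b]

section AtkinLehner

variable {N ℓ M : ℕ} {a b : ℤ}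

theorem atkinLehnerMatrix_det (hNM : N = ℓ * M) (hab : ℓ * b - a * M = 1) :
    (atkinLehnerMatrix N ℓ a b).det = ℓ := by
  rw [atkinLehnerMatrix, det_fin_two_of, hNM]
  push_cast
  linear_combination (ℓ : ℤ) * hab

theorem atkinLehnerMatrix_map {R : Type*} [Ring R] :
    (atkinLehnerMatrix N ℓ a b).map (Int.cast : ℤ → R) = !![(ℓ : R), a; N, ℓ * b] := by
  ext i j; fin_cases i <;> fin_cases j <;> simp [atkinLehnerMatrix]

def atkinLehnerFactor (hab : ℓ * b - a * M = 1) : SL(2, ℤ) :=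
  ⟨!![1, a; (M : ℤ), ℓ * b], by rw [det_fin_two_of]; linear_combination hab⟩

theorem atkinLehnerMatrix_eq_factor_mul (hNM : N = ℓ * M) (hab : ℓ * b - a * M = 1) :
    atkinLehnerMatrix N ℓ a b =
      (atkinLehnerFactor hab : Matrix (Fin 2) (Fin 2) ℤ) * !![(ℓ : ℤ), 0; 0, 1] := by
  simp [atkinLehnerMatrix, atkinLehnerFactor, hNM, mul_comm]

theorem exists_diag_mul_eq_mul_diag (hNM : N = ℓ * M) {δ : SL(2, ℤ)} {c : ℤ}
    (hc : δ 1 0 = N * c) :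
    ∃ δ' : SL(2, ℤ), (δ' : Matrix (Fin 2) (Fin 2) ℤ) = !![δ 0 0, ℓ * δ 0 1; M * c, δ 1 1] ∧
      !![(ℓ : ℤ), 0; 0, 1] * δ = (δ' : Matrix (Fin 2) (Fin 2) ℤ) * !![(ℓ : ℤ), 0; 0, 1] := by
  have hdet : (!![δ 0 0, ℓ * δ 0 1; M * c, δ 1 1] : Matrix (Fin 2) (Fin 2) ℤ).det = 1 := by
    have h := δ.det_coe
    rw [det_fin_two, hc, hNM] at h
    push_cast at h
    rw [det_fin_two_of]
    linear_combination h
  refine ⟨⟨_, hdet⟩, rfl, ?_⟩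
  change _ = !![δ 0 0, ℓ * δ 0 1; M * c, δ 1 1] * _
  rw [eta_fin_two (δ : Matrix (Fin 2) (Fin 2) ℤ)]
  simp [hc, hNM, mul_comm, mul_left_comm]

theorem exists_mem_Gamma0_mul_atkinLehnerMatrix_eq (hNM : N = ℓ * M)
    (hab : ℓ * b - a * M = 1) {δ : SL(2, ℤ)} (hδ : δ ∈ Gamma0 N) :
    ∃ m : SL(2, ℤ), m ∈ Gamma0 N ∧
      (m : Matrix (Fin 2) (Fin 2) ℤ) * atkinLehnerMatrix N ℓ a b =
        atkinLehnerMatrix N ℓ a b * δ ∧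
      m 1 1 ≡ δ 1 1 [ZMOD M] := by
  obtain ⟨c, hc⟩ : (N : ℤ) ∣ δ 1 0 :=
    (ZMod.intCast_zmod_eq_zero_iff_dvd _ N).mp (Gamma0_mem.mp hδ)
  obtain ⟨δ', hδ', hdiag⟩ := exists_diag_mul_eq_mul_diag hNM hc
  let A := atkinLehnerFactor hab
  have hm : ((A * δ' * A⁻¹ : SL(2, ℤ)) : Matrix (Fin 2) (Fin 2) ℤ) =
      !![1, a; (M : ℤ), ℓ * b] * !![δ 0 0, ℓ * δ 0 1; M * c, δ 1 1] * !![ℓ * b, -a; -M, 1] := by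
    rw [Matrix.SpecialLinearGroup.coe_mul, Matrix.SpecialLinearGroup.coe_mul,
      Matrix.SpecialLinearGroup.coe_inv, hδ']
    simp only [A, atkinLehnerFactor, adjugate_fin_two_of]
  refine ⟨A * δ' * A⁻¹, ?_, ?_, ?_⟩
  · rw [Gamma0_mem, ZMod.intCast_zmod_eq_zero_iff_dvd, hm, hNM]
    refine ⟨b * δ 0 0 + ℓ * b ^ 2 * c - M * δ 0 1 - b * δ 1 1, ?_⟩
    simp only [mul_fin_two, of_apply, cons_val', cons_val_zero, cons_val_one, cons_val_fin_one,
      Nat.cast_mul]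
    ring
  · calc ((A * δ' * A⁻¹ : SL(2, ℤ)) : Matrix (Fin 2) (Fin 2) ℤ) * atkinLehnerMatrix N ℓ a b
        = ((A * δ' * A⁻¹ * A : SL(2, ℤ)) : Matrix (Fin 2) (Fin 2) ℤ) * !![(ℓ : ℤ), 0; 0, 1] := by
          rw [atkinLehnerMatrix_eq_factor_mul hNM hab, Matrix.SpecialLinearGroup.coe_mul _ A,
            Matrix.mul_assoc]
      _ = A * (δ' * !![(ℓ : ℤ), 0; 0, 1]) := by
          rw [inv_mul_cancel_right, Matrix.SpecialLinearGroup.coe_mul, Matrix.mul_assoc]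
      _ = atkinLehnerMatrix N ℓ a b * δ := by
          rw [← hdiag, atkinLehnerMatrix_eq_factor_mul hNM hab, Matrix.mul_assoc]
  · rw [hm, Int.modEq_iff_dvd]
    refine ⟨a * δ 0 0 + ℓ * b * c * a - ℓ * δ 0 1 - a * δ 1 1, ?_⟩
    simp only [mul_fin_two, of_apply, cons_val', cons_val_one, cons_val_fin_one]
    linear_combination (-δ 1 1) * hab

theorem exists_GL_coe_eq_atkinLehnerMatrix (hNM : N = ℓ * M) (hab : ℓ * b - a * M = 1)
    (hℓ : ℓ ≠ 0) :
    ∃ γ : GL (Fin 2) ℝ, 0 < γ.det.val ∧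
      (γ : Matrix (Fin 2) (Fin 2) ℝ) = (atkinLehnerMatrix N ℓ a b).map Int.cast := by
  have hdet : ((atkinLehnerMatrix N ℓ a b).map (Int.cast : ℤ → ℝ)).det = ℓ := by
    rw [← Int.cast_det, atkinLehnerMatrix_det hNM hab, Int.cast_natCast]
  refine ⟨.mkOfDetNeZero _ (hdet ▸ Nat.cast_ne_zero.mpr hℓ), ?_, rfl⟩
  rw [GeneralLinearGroup.val_det_apply]
  change 0 < ((atkinLehnerMatrix N ℓ a b).map Int.cast).det
  rw [hdet]
  exact_mod_cast Nat.pos_of_ne_zero hℓ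

end AtkinLehner

theorem Matrix.map_intCast_mul_eq_mul {n R : Type*} [Fintype n] [Ring R]
    {m γ δ : Matrix n n ℤ} (h : m * γ = γ * δ) :
    m.map (Int.cast : ℤ → R) * γ.map Int.cast = γ.map Int.cast * δ.map Int.cast := by
  have hR := congrArg (·.map (Int.castRingHom R)) h
  simp only [Matrix.map_mul] at hR
  simpa only [Int.coe_castRingHom] using hR

theorem Matrix.map_intCast_eq_mul_mul_inv {n K : Type*} [Fintype n] [DecidableEq n] [Field K]
    [CharZero K] {m γ δ : Matrix n n ℤ} (h : m * γ = γ * δ) (hγ : γ.det ≠ 0) :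
    m.map (Int.cast : ℤ → K) = γ.map Int.cast * δ.map Int.cast * (γ.map Int.cast)⁻¹ := by
  have hdet : IsUnit (γ.map (Int.cast : ℤ → K)).det := by
    rw [← Int.cast_det]; exact isUnit_iff_ne_zero.mpr (Int.cast_ne_zero.mpr hγ)
  rw [← map_intCast_mul_eq_mul h, mul_nonsing_inv_cancel_right _ _ hdet]

theorem UpperHalfPlane.denom_mul_of_det_pos (g : GL (Fin 2) ℝ) {h : GL (Fin 2) ℝ}
    (hh : 0 < h.det.val) (z : ℍ) :
    denom (g * h) z = denom g ↑(h • z) * denom h z := by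
  rw [coe_smul_of_det_pos hh]
  exact denom_cocycle g h z.im_ne_zero

theorem UpperHalfPlane.denom_zpow_neg_mul_smul_of_mul_eq_mul {f : ℍ → ℂ} {k : ℤ} {c : ℂ}
    {γ δ m : GL (Fin 2) ℝ} (hγ : 0 < γ.det.val) (hδ : 0 < δ.det.val) (hmγ : m * γ = γ * δ)
    (hf : ∀ w, f (m • w) = c * denom m w ^ k * f w) (z : ℍ) :
    denom γ ↑(δ • z) ^ (-k) * f (γ • δ • z) =
      c * denom δ z ^ k * (denom γ z ^ (-k) * f (γ • z)) := by
  have hcocycle : denom m ↑(γ • z) * denom γ z = denom γ ↑(δ • z) * denom δ z := by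
    rw [← denom_mul_of_det_pos _ hγ, ← denom_mul_of_det_pos _ hδ, hmγ]
  have hsmul : γ • δ • z = m • γ • z := by rw [← mul_smul, ← mul_smul, hmγ]
  have hγz := denom_ne_zero γ z
  have hγδz := denom_ne_zero γ (δ • z)
  rw [hsmul, hf, eq_div_of_mul_eq hγz hcocycle, div_zpow, mul_zpow, _root_.zpow_neg,
    _root_.zpow_neg]
  field_simp

theorem atkinLehner_preserves_character_general (N ℓ : ℕ)
    (hdvd : ℓ ∣ N) (a b : ℤ)
    (hab : (ℓ : ℤ) * b - a * ((N / ℓ : ℕ) : ℤ) = 1) :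
    (∀ δ : SL(2, ℤ), δ ∈ Gamma0 N →
      ∃ m : Matrix (Fin 2) (Fin 2) ℤ,
        m.map (Int.cast : ℤ → ℚ) =
          !![(ℓ : ℚ), (a : ℚ); (N : ℚ), (ℓ : ℚ) * (b : ℚ)] *
            ((δ : Matrix (Fin 2) (Fin 2) ℤ).map (Int.cast : ℤ → ℚ)) *
            (!![(ℓ : ℚ), (a : ℚ); (N : ℚ), (ℓ : ℚ) * (b : ℚ)])⁻¹ ∧
        m.det = 1 ∧ (N : ℤ) ∣ m 1 0 ∧
        m 1 1 ≡ (δ : Matrix (Fin 2) (Fin 2) ℤ) 1 1 [ZMOD ((N / ℓ : ℕ) : ℤ)]) ∧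
    (∀ (χ' : DirichletCharacter ℂ (N / ℓ)) (k : ℤ) (f : ℍ → ℂ),
      (∀ δ : SL(2, ℤ), δ ∈ Gamma0 N → ∀ z : ℍ,
        f (δ • z) =
          χ' (((δ : Matrix (Fin 2) (Fin 2) ℤ) 1 1 : ZMod (N / ℓ))) *
            (((δ : Matrix (Fin 2) (Fin 2) ℤ) 1 0 : ℂ) * z +
              ((δ : Matrix (Fin 2) (Fin 2) ℤ) 1 1 : ℂ)) ^ k * f z) →
      ∀ δ : SL(2, ℤ), δ ∈ Gamma0 N → ∀ z : ℍ, ∀ wδ wz : ℍ,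
        (wδ : ℂ) = ((ℓ : ℂ) * ((δ • z : ℍ) : ℂ) + (a : ℂ)) /
            ((N : ℂ) * ((δ • z : ℍ) : ℂ) + (ℓ : ℂ) * (b : ℂ)) →
        (wz : ℂ) = ((ℓ : ℂ) * z + (a : ℂ)) / ((N : ℂ) * z + (ℓ : ℂ) * (b : ℂ)) →
        ((N : ℂ) * ((δ • z : ℍ) : ℂ) + (ℓ : ℂ) * (b : ℂ)) ^ (-k) * f wδ =
          χ' (((δ : Matrix (Fin 2) (Fin 2) ℤ) 1 1 : ZMod (N / ℓ))) *
            (((δ : Matrix (Fin 2) (Fin 2) ℤ) 1 0 : ℂ) * z +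
              ((δ : Matrix (Fin 2) (Fin 2) ℤ) 1 1 : ℂ)) ^ k *
            (((N : ℂ) * z + (ℓ : ℂ) * (b : ℂ)) ^ (-k) * f wz)) := by
  have hNM : N = ℓ * (N / ℓ) := (Nat.mul_div_cancel' hdvd).symm
  -- `ℓ = 0` would make `N / ℓ = 0`, turning `hab` into `0 = 1`.
  have hℓ : ℓ ≠ 0 := by rintro rfl; simp at hab
  constructor
  · intro δ hδ
    obtain ⟨m, hmΓ, hmγ, hm11⟩ := exists_mem_Gamma0_mul_atkinLehnerMatrix_eq hNM hab hδ
    refine ⟨m, ?_, m.det_coe, (ZMod.intCast_zmod_eq_zero_iff_dvd _ N).mp (Gamma0_mem.mp hmΓ),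
      hm11⟩
    rw [← atkinLehnerMatrix_map]
    exact Matrix.map_intCast_eq_mul_mul_inv hmγ
      (by rw [atkinLehnerMatrix_det hNM hab]; exact_mod_cast hℓ)
  · intro χ' k f hf δ hδ z wδ wz hwδ hwz
    obtain ⟨m, hmΓ, hmγ, hm11⟩ := exists_mem_Gamma0_mul_atkinLehnerMatrix_eq hNM hab hδ
    obtain ⟨γ, hγdet, hγ⟩ := exists_GL_coe_eq_atkinLehnerMatrix hNM hab hℓ
    have hmγ' : (m : GL (Fin 2) ℝ) * γ = γ * δ := by
      ext : 1
      simpa [hγ] using Matrix.map_intCast_mul_eq_mul (R := ℝ) hmγ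
    have hsmul (u : ℍ) : ((γ • u : ℍ) : ℂ) = (ℓ * u + a) / (N * u + ℓ * b) := by
      rw [coe_smul_of_det_pos hγdet]
      simp [num, denom, hγ, atkinLehnerMatrix]
    have hχ : χ' (m 1 1) = χ' (δ 1 1) :=
      congrArg χ' ((ZMod.intCast_eq_intCast_iff _ _ _).mpr hm11)
    obtain rfl : wz = γ • z := UpperHalfPlane.ext (by rw [hwz, hsmul])
    obtain rfl : wδ = γ • δ • z := UpperHalfPlane.ext (by rw [hwδ, hsmul])
    have hfm (w : ℍ) : f ((m : GL (Fin 2) ℝ) • w) = χ' (δ 1 1) * denom m w ^ k * f w := by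
      rw [← ModularGroup.sl_moeb, hf m hmΓ w, hχ, ModularGroup.denom_apply]
    simpa [denom, hγ, atkinLehnerMatrix] using
      denom_zpow_neg_mul_smul_of_mul_eq_mul hγdet (by simp) hmγ' hfm z

/-- (i) `γ_ℓ δ γ_ℓ⁻¹ ∈ Γ₀(N)` with lower-right entry congruent to that of
`δ` mod `N/ℓ`; (ii) consequently the Atkin–Lehner operator preserves the transformation
law of modular forms with character `χ'` induced from level `N/ℓ`. -/
theorem atkinLehner_preserves_character (N ℓ : ℕ) (hN : 0 < N) (hℓ : ℓ.Prime)
    (hdvd : ℓ ∣ N) (hndvd : ¬ ℓ ^ 2 ∣ N) (a b : ℤ)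
    (hab : (ℓ : ℤ) * b - a * ((N / ℓ : ℕ) : ℤ) = 1) :
    (∀ δ : SL(2, ℤ), δ ∈ Gamma0 N →
      ∃ m : Matrix (Fin 2) (Fin 2) ℤ,
        m.map (Int.cast : ℤ → ℚ) =
          !![(ℓ : ℚ), (a : ℚ); (N : ℚ), (ℓ : ℚ) * (b : ℚ)] *
            ((δ : Matrix (Fin 2) (Fin 2) ℤ).map (Int.cast : ℤ → ℚ)) *
            (!![(ℓ : ℚ), (a : ℚ); (N : ℚ), (ℓ : ℚ) * (b : ℚ)])⁻¹ ∧
        m.det = 1 ∧ (N : ℤ) ∣ m 1 0 ∧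
        m 1 1 ≡ (δ : Matrix (Fin 2) (Fin 2) ℤ) 1 1 [ZMOD ((N / ℓ : ℕ) : ℤ)]) ∧
    (∀ (χ' : DirichletCharacter ℂ (N / ℓ)) (k : ℤ) (f : ℍ → ℂ),
      (∀ δ : SL(2, ℤ), δ ∈ Gamma0 N → ∀ z : ℍ,
        f (δ • z) =
          χ' (((δ : Matrix (Fin 2) (Fin 2) ℤ) 1 1 : ZMod (N / ℓ))) *
            (((δ : Matrix (Fin 2) (Fin 2) ℤ) 1 0 : ℂ) * z +
              ((δ : Matrix (Fin 2) (Fin 2) ℤ) 1 1 : ℂ)) ^ k * f z) →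
      ∀ δ : SL(2, ℤ), δ ∈ Gamma0 N → ∀ z : ℍ, ∀ wδ wz : ℍ,
        (wδ : ℂ) = ((ℓ : ℂ) * ((δ • z : ℍ) : ℂ) + (a : ℂ)) /
            ((N : ℂ) * ((δ • z : ℍ) : ℂ) + (ℓ : ℂ) * (b : ℂ)) →
        (wz : ℂ) = ((ℓ : ℂ) * z + (a : ℂ)) / ((N : ℂ) * z + (ℓ : ℂ) * (b : ℂ)) →
        ((N : ℂ) * ((δ • z : ℍ) : ℂ) + (ℓ : ℂ) * (b : ℂ)) ^ (-k) * f wδ =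
          χ' (((δ : Matrix (Fin 2) (Fin 2) ℤ) 1 1 : ZMod (N / ℓ))) *
            (((δ : Matrix (Fin 2) (Fin 2) ℤ) 1 0 : ℂ) * z +
              ((δ : Matrix (Fin 2) (Fin 2) ℤ) 1 1 : ℂ)) ^ k *
            (((N : ℂ) * z + (ℓ : ℂ) * (b : ℂ)) ^ (-k) * f wz)) :=
  atkinLehner_preserves_character_general N ℓ hdvd a b hab
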